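/- The set Ḡ = ℂ^d × G, endowed with the operation (u,γ) ⋆ (v,δ) = (v + δ_∅ u, γ★(Ξ_u δ)), is a (noncommutative) group with unit (0,1); moreover ℂ^d × {1} and {0} × G are subgroups of Ḡ. -/

import Mathlib

open scoped BigOperators

/-- Convolution product on `ℂ^W`: `(δ★δ′)_w = Σ_{w=w₁w₂} δ_{w₁} δ′_{w₂}`. -/
noncomputable def conv {A : Type*} (x y : List A → ℂ) : List A → ℂ :=
  fun w => ∑ i ∈ Finset.range (w.length + 1), x (w.take i) * y (w.drop i)

/-- Shuffle product of two words, as a multiset of words. -/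
def shuffle {A : Type*} : List A → List A → Multiset (List A)
  | [], w => {w}
  | w, [] => {w}
  | a :: u, b :: v =>
      ((shuffle u (b :: v)).map (a :: ·)) + ((shuffle (a :: u) v).map (b :: ·))

/-- Membership in the group `G`: the shuffle relations with `γ_∅ = 1`. -/
def isGrp {A : Type*} (γ : List A → ℂ) : Prop :=
  γ [] = 1 ∧ ∀ w w' : List A, γ w * γ w' = ((shuffle w w').map γ).sum

/-- Membership in the Lie algebra `𝔤`. -/
def isLie {A : Type*} (β : List A → ℂ) : Prop :=
  β [] = 0 ∧ ∀ w w' : List A, w ≠ [] → w' ≠ [] → ((shuffle w w').map β).sum = 0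

/-- The unit `1` of the convolution product. -/
def unitCW {A : Type*} : List A → ℂ := fun w => match w with | [] => 1 | _ => 0

/-- `ν^v_ℓ = Σ_j v_j ν_{j,ℓ}` for a letter `ℓ`. -/
noncomputable def nuL {A : Type*} {d : ℕ} (ν : Fin d → A → ℂ) (v : Fin d → ℂ) (ℓ : A) : ℂ :=
  ∑ j, v j * ν j ℓ

/-- `ν^v_w = ν^v_{ℓ₁} + ⋯ + ν^v_{ℓ_n}` for a word `w = ℓ₁⋯ℓ_n`. -/
noncomputable def nuW {A : Type*} {d : ℕ} (ν : Fin d → A → ℂ) (v : Fin d → ℂ) (w : List A) : ℂ :=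
  (w.map (nuL ν v)).sum

/-- The operator `Ξ_v`: `(Ξ_v δ)_w = exp(ν^v_w) δ_w`. -/
noncomputable def XiOp {A : Type*} {d : ℕ} (ν : Fin d → A → ℂ) (v : Fin d → ℂ)
    (δ : List A → ℂ) : List A → ℂ :=
  fun w => Complex.exp (nuW ν v w) * δ w

/-- The operator `ξ_v`: `(ξ_v δ)_w = ν^v_w δ_w`. -/
noncomputable def xiOp {A : Type*} {d : ℕ} (ν : Fin d → A → ℂ) (v : Fin d → ℂ)
    (δ : List A → ℂ) : List A → ℂ :=
  fun w => nuW ν v w * δ w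

/-- The operation `(u,γ) ⋆ (v,δ) = (v + δ_∅ u, γ★(Ξ_u δ))` on `ℂ^d × ℂ^W`. -/
noncomputable def starExt {A : Type*} {d : ℕ} (ν : Fin d → A → ℂ)
    (p q : (Fin d → ℂ) × (List A → ℂ)) : (Fin d → ℂ) × (List A → ℂ) :=
  (q.1 + q.2 [] • p.1, conv p.2 (XiOp ν p.1 q.2))

/-! The shuffle relations say that `γ ∈ G` is a character of the shuffle algebra, and `★` is the
product dual to the deconcatenation coproduct `Δ`. Since `Δ` is multiplicative for the shuffle
product, `G` is closed under `★`, and the antipode `γ ↦ (-1)^|w| γ(wᴿ)` provides `★`-inverses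
in `G` through a telescoping alternating sum. As `ν^v` is additive along words and constant on
shuffles, `Ξ_v` is a `★`-automorphism preserving `G` with `Ξ_u Ξ_v = Ξ_{u+v}`, so `Ḡ` is the
semidirect product `ℂ^d ⋉ G` and its group axioms reduce to these facts. -/

lemma Multiset.sum_map_product_mul {α β R : Type*} [NonUnitalNonAssocSemiring R]
    (M : Multiset α) (N : Multiset β) (f : α → R) (g : β → R) :
    ((M ×ˢ N).map fun r => f r.1 * g r.2).sum = (M.map f).sum * (N.map g).sum := by
  induction M using Multiset.induction with
  | empty => simp
  | cons a M ih => simp [ih, add_mul, Multiset.sum_map_mul_left]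

section ShuffleCharacters

variable {A : Type*}

@[simp] lemma shuffle_nil_left (w : List A) : shuffle [] w = {w} := by simp [shuffle]

@[simp] lemma shuffle_nil_right (w : List A) : shuffle w [] = {w} := by cases w <;> simp [shuffle]

lemma shuffle_cons_cons (a b : A) (u v : List A) :
    shuffle (a :: u) (b :: v) =
      (shuffle u (b :: v)).map (a :: ·) + (shuffle (a :: u) v).map (b :: ·) := by
  simp [shuffle]

lemma perm_append_of_mem_shuffle : ∀ {w w' u : List A}, u ∈ shuffle w w' → u.Perm (w ++ w')
  | [], w', u, hu => by simp_all
  | a :: w, [], u, hu => by simp_all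
  | a :: w, b :: w', u, hu => by
    rw [shuffle_cons_cons, Multiset.mem_add, Multiset.mem_map, Multiset.mem_map] at hu
    rcases hu with ⟨t, ht, rfl⟩ | ⟨t, ht, rfl⟩
    · exact (perm_append_of_mem_shuffle ht).cons a
    · exact ((perm_append_of_mem_shuffle ht).cons b).trans List.perm_middle.symm

lemma shuffle_append_singleton (a b : A) : ∀ x y : List A,
    shuffle (x ++ [a]) (y ++ [b]) =
      (shuffle x (y ++ [b])).map (· ++ [a]) + (shuffle (x ++ [a]) y).map (· ++ [b])
  | [], [] => by simp [shuffle_cons_cons, add_comm]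
  | [], c :: y => by
    have ih := shuffle_append_singleton a b [] y
    simp only [List.nil_append, List.cons_append] at ih ⊢
    rw [shuffle_cons_cons, ih, shuffle_cons_cons]
    simp only [Multiset.map_add, Multiset.map_map, Function.comp_def, shuffle_nil_left,
      Multiset.map_singleton, List.cons_append]
    abel
  | c :: x, [] => by
    have ih := shuffle_append_singleton a b x []
    simp only [List.nil_append, List.cons_append] at ih ⊢
    rw [shuffle_cons_cons, ih, shuffle_cons_cons]
    simp only [Multiset.map_add, Multiset.map_map, Function.comp_def, shuffle_nil_right,
      Multiset.map_singleton, List.cons_append]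
    abel
  | c :: x, e :: y => by
    have ihx := shuffle_append_singleton a b x (e :: y)
    have ihy := shuffle_append_singleton a b (c :: x) y
    simp only [List.cons_append] at ihx ihy ⊢
    rw [shuffle_cons_cons, ihx, ihy, shuffle_cons_cons, shuffle_cons_cons]
    simp only [Multiset.map_add, Multiset.map_map, Function.comp_def, List.cons_append]
    abel

lemma shuffle_reverse : ∀ w w' : List A,
    shuffle w.reverse w'.reverse = (shuffle w w').map List.reverse
  | [], w' => by simp
  | a :: u, [] => by simp
  | a :: u, b :: v => by
    rw [List.reverse_cons, List.reverse_cons, shuffle_append_singleton, ← List.reverse_cons,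
      ← List.reverse_cons, shuffle_reverse u, shuffle_reverse (a :: u), shuffle_cons_cons]
    simp [Multiset.map_map]

def deconcat (w : List A) : Multiset (List A × List A) :=
  (Multiset.range (w.length + 1)).map fun i => (w.take i, w.drop i)

@[simp] lemma deconcat_nil : deconcat ([] : List A) = {([], [])} := rfl

lemma deconcat_cons (a : A) (w : List A) :
    deconcat (a :: w) = ([], a :: w) ::ₘ (deconcat w).map (Prod.map (a :: ·) id) := by
  simp only [deconcat, List.length_cons, Multiset.range, List.range_succ_eq_map,
    Multiset.map_coe, ← Multiset.cons_coe, Multiset.map_cons]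
  simp [Function.comp_def]

lemma deconcat_bind_shuffle : ∀ w w' : List A,
    (shuffle w w').bind deconcat =
      (deconcat w).bind fun p => (deconcat w').bind fun q => shuffle p.1 q.1 ×ˢ shuffle p.2 q.2
  | [], w' => by simp [SProd.sprod, Multiset.product, Multiset.bind_singleton _ fun p => p]
  | a :: u, [] => by simp [SProd.sprod, Multiset.product, Multiset.bind_singleton _ fun p => p]
  | a :: u, b :: v => by
    rw [shuffle_cons_cons, Multiset.add_bind, Multiset.bind_map, Multiset.bind_map]
    simp only [deconcat_cons, Multiset.bind_cons]
    rw [← Multiset.map_bind, ← Multiset.map_bind, deconcat_bind_shuffle u,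
      deconcat_bind_shuffle (a :: u) v]
    simp only [deconcat_cons, Multiset.cons_bind, Multiset.bind_map, Multiset.map_bind,
      shuffle_nil_left, shuffle_nil_right, shuffle_cons_cons, SProd.sprod, Multiset.product,
      Multiset.singleton_bind, Multiset.map_add, Multiset.map_map, Function.comp_def,
      Multiset.bind_add, Multiset.add_bind, Prod.map, id]
    abel

lemma conv_eq_sum_deconcat (x y : List A → ℂ) (w : List A) :
    conv x y w = ((deconcat w).map fun p => x p.1 * y p.2).sum := by
  rw [deconcat, Multiset.map_map]
  rfl

@[simp] lemma unitCW_nil : (unitCW : List A → ℂ) [] = 1 := rfl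

@[simp] lemma conv_nil (x y : List A → ℂ) : conv x y [] = x [] * y [] := by simp [conv]

lemma conv_cons (x y : List A → ℂ) (a : A) (w : List A) :
    conv x y (a :: w) = x [] * y (a :: w) + conv (fun u => x (a :: u)) y w := by
  simp [conv_eq_sum_deconcat, deconcat_cons, Multiset.map_map]

lemma conv_const_mul_add_left (c : ℂ) (x y z : List A → ℂ) :
    conv (fun u => c * x u + y u) z = fun w => c * conv x z w + conv y z w := by
  funext w
  simp only [conv, add_mul, Finset.sum_add_distrib, Finset.mul_sum, mul_assoc]

lemma conv_assoc (x y z : List A → ℂ) : conv (conv x y) z = conv x (conv y z) := by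
  funext w
  induction w generalizing x with
  | nil => simp [mul_assoc]
  | cons a w ih =>
    have hxy : (fun u => conv x y (a :: u)) =
        fun u => x [] * y (a :: u) + conv (fun u => x (a :: u)) y u := by
      funext u
      exact conv_cons x y a u
    rw [conv_cons, hxy, conv_const_mul_add_left]
    dsimp only
    rw [ih, conv_cons, conv_cons, conv_nil]
    ring

@[simp] lemma unitCW_conv (x : List A → ℂ) : conv unitCW x = x := by
  funext w
  cases w with
  | nil => simp [unitCW]
  | cons a w =>
    rw [conv_cons]
    simp [conv, unitCW]

@[simp] lemma conv_unitCW (x : List A → ℂ) : conv x unitCW = x := by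
  funext w
  induction w generalizing x with
  | nil => simp [unitCW]
  | cons a w ih => simp [conv_cons, ih, unitCW]

lemma isGrp_unitCW : isGrp (unitCW : List A → ℂ) := by
  refine ⟨rfl, ?_⟩
  rintro (_ | ⟨a, u⟩) (_ | ⟨b, v⟩) <;>
    simp [shuffle_cons_cons, Multiset.map_map, Function.comp_def, unitCW]

lemma isGrp_conv {γ δ : List A → ℂ} (hγ : isGrp γ) (hδ : isGrp δ) : isGrp (conv γ δ) := by
  refine ⟨by simp [hγ.1, hδ.1], fun w w' => ?_⟩
  calc conv γ δ w * conv γ δ w'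
      = ((deconcat w).map fun p => ((deconcat w').map fun q =>
          (γ p.1 * γ q.1) * (δ p.2 * δ q.2)).sum).sum := by
        rw [conv_eq_sum_deconcat, conv_eq_sum_deconcat, ← Multiset.sum_map_mul_right]
        simp_rw [← Multiset.sum_map_mul_left, mul_mul_mul_comm]
    _ = (((deconcat w).bind fun p => (deconcat w').bind fun q =>
          shuffle p.1 q.1 ×ˢ shuffle p.2 q.2).map fun r => γ r.1 * δ r.2).sum := by
        simp only [Multiset.map_bind, Multiset.sum_bind, Multiset.sum_map_product_mul, hγ.2, hδ.2]
    _ = ((shuffle w w').map (conv γ δ)).sum := by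
        rw [← deconcat_bind_shuffle, Multiset.map_bind, Multiset.sum_bind]
        simp only [conv_eq_sum_deconcat]

section Xi

variable {d : ℕ} (ν : Fin d → A → ℂ)

lemma nuW_append (v : Fin d → ℂ) (w₁ w₂ : List A) :
    nuW ν v (w₁ ++ w₂) = nuW ν v w₁ + nuW ν v w₂ := by
  simp [nuW]

lemma nuL_add (u v : Fin d → ℂ) : nuL ν (u + v) = fun ℓ => nuL ν u ℓ + nuL ν v ℓ := by
  funext ℓ
  simp [nuL, add_mul, Finset.sum_add_distrib]

lemma nuW_add (u v : Fin d → ℂ) (w : List A) : nuW ν (u + v) w = nuW ν u w + nuW ν v w := by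
  simp [nuW, nuL_add, List.sum_map_add]

lemma nuW_of_mem_shuffle (v : Fin d → ℂ) {w w' t : List A} (ht : t ∈ shuffle w w') :
    nuW ν v t = nuW ν v w + nuW ν v w' := by
  rw [← nuW_append]
  exact ((perm_append_of_mem_shuffle ht).map _).sum_eq

@[simp] lemma XiOp_nil (v : Fin d → ℂ) (δ : List A → ℂ) : XiOp ν v δ [] = δ [] := by
  simp [XiOp, nuW]

@[simp] lemma XiOp_zero (δ : List A → ℂ) : XiOp ν 0 δ = δ := by
  funext w
  have hν : nuL ν 0 = fun _ => 0 := by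
    funext ℓ
    simp [nuL]
  simp [XiOp, nuW, hν]

lemma XiOp_XiOp (u v : Fin d → ℂ) (δ : List A → ℂ) :
    XiOp ν u (XiOp ν v δ) = XiOp ν (u + v) δ := by
  funext w
  simp only [XiOp, nuW_add, Complex.exp_add]
  ring

@[simp] lemma XiOp_unitCW (v : Fin d → ℂ) : XiOp ν v (unitCW : List A → ℂ) = unitCW := by
  funext w
  cases w <;> simp [XiOp, nuW, unitCW]

lemma XiOp_conv (v : Fin d → ℂ) (x y : List A → ℂ) :
    XiOp ν v (conv x y) = conv (XiOp ν v x) (XiOp ν v y) := by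
  funext w
  simp only [XiOp, conv, Finset.mul_sum]
  refine Finset.sum_congr rfl fun i _ => ?_
  rw [← List.take_append_drop i w, nuW_append, Complex.exp_add, List.take_append_drop]
  ring

lemma isGrp_XiOp (v : Fin d → ℂ) {γ : List A → ℂ} (hγ : isGrp γ) : isGrp (XiOp ν v γ) := by
  refine ⟨by simp [hγ.1], fun w w' => ?_⟩
  calc XiOp ν v γ w * XiOp ν v γ w'
      = Complex.exp (nuW ν v w + nuW ν v w') * (γ w * γ w') := by
        simp only [XiOp, Complex.exp_add]
        ring
    _ = ((shuffle w w').map (XiOp ν v γ)).sum := by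
        rw [hγ.2, ← Multiset.sum_map_mul_left]
        refine congrArg _ (Multiset.map_congr rfl fun t ht => ?_)
        rw [XiOp, nuW_of_mem_shuffle ν v ht]

end Xi

def antipode (γ : List A → ℂ) (w : List A) : ℂ := (-1) ^ w.length * γ w.reverse

lemma antipode_antipode (γ : List A → ℂ) : antipode (antipode γ) = γ := by
  funext w
  simp [antipode, ← mul_assoc, ← pow_add]

lemma isGrp_antipode {γ : List A → ℂ} (hγ : isGrp γ) : isGrp (antipode γ) := by
  refine ⟨by simp [antipode, hγ.1], fun w w' => ?_⟩
  calc antipode γ w * antipode γ w'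
      = (-1) ^ (w.length + w'.length) * (γ w.reverse * γ w'.reverse) := by
        rw [antipode, antipode, pow_add]
        ring
    _ = ((shuffle w w').map (antipode γ)).sum := by
        rw [hγ.2, shuffle_reverse, Multiset.map_map, ← Multiset.sum_map_mul_left]
        refine congrArg _ (Multiset.map_congr rfl fun t ht => ?_)
        rw [Function.comp_apply, antipode, (perm_append_of_mem_shuffle ht).length_eq,
          List.length_append]

-- At `x = []` this is `(antipode γ ★ γ)_y`; splitting each shuffle by its first letter makes the
-- alternating sum telescope, as recorded by `altShuffleSum_cons_left`.
def altShuffleSum (γ : List A → ℂ) (x y : List A) : ℂ :=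
  ∑ i ∈ Finset.range (y.length + 1),
    (-1) ^ i * ((shuffle ((y.take i).reverse ++ x) (y.drop i)).map γ).sum

lemma altShuffleSum_cons_right (γ : List A → ℂ) (x : List A) (c : A) (y : List A) :
    altShuffleSum γ x (c :: y) =
      ((shuffle x (c :: y)).map γ).sum - altShuffleSum γ (c :: x) y := by
  rw [altShuffleSum, altShuffleSum, List.length_cons, Finset.sum_range_succ', add_comm]
  simp [pow_succ, Finset.sum_neg_distrib, sub_eq_add_neg]

lemma altShuffleSum_cons_left (γ : List A → ℂ) :
    ∀ (x : List A) (c : A) (y : List A),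
      altShuffleSum γ (c :: x) y = ((shuffle x y).map fun u => γ (c :: u)).sum
  | x, c, [] => by simp [altShuffleSum]
  | x, c, e :: y => by
    rw [altShuffleSum_cons_right, altShuffleSum_cons_left, shuffle_cons_cons]
    simp [Multiset.map_map]

lemma antipode_conv {γ : List A → ℂ} (hγ : isGrp γ) : conv (antipode γ) γ = unitCW := by
  funext w
  rcases w with _ | ⟨c, y⟩
  · simp [antipode, unitCW, hγ.1]
  · calc conv (antipode γ) γ (c :: y) = altShuffleSum γ [] (c :: y) := by
          refine Finset.sum_congr rfl fun i hi => ?_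
          rw [antipode, mul_assoc, hγ.2, List.append_nil, List.length_take_of_le
            (Nat.lt_succ_iff.mp (Finset.mem_range.mp hi))]
      _ = 0 := by simp [altShuffleSum_cons_right, altShuffleSum_cons_left]

lemma conv_antipode {γ : List A → ℂ} (hγ : isGrp γ) : conv γ (antipode γ) = unitCW := by
  simpa [antipode_antipode] using antipode_conv (isGrp_antipode hγ)

section ExtendedGroup

variable {d : ℕ} (ν : Fin d → A → ℂ)

lemma starExt_assoc (p q r : (Fin d → ℂ) × (List A → ℂ)) (hq : q.2 [] = 1) :
    starExt ν (starExt ν p q) r = starExt ν p (starExt ν q r) := by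
  refine Prod.ext ?_ ?_
  · simp only [starExt, conv_nil, XiOp_nil, hq, one_smul, one_mul, smul_add, add_assoc]
  · simp only [starExt, hq, one_smul, XiOp_conv, XiOp_XiOp, conv_assoc, add_comm q.1]

@[simp] lemma starExt_zero_unitCW (p : (Fin d → ℂ) × (List A → ℂ)) :
    starExt ν p (0, unitCW) = p := by
  simp [starExt]

@[simp] lemma zero_unitCW_starExt (p : (Fin d → ℂ) × (List A → ℂ)) :
    starExt ν (0, unitCW) p = p := by
  simp [starExt]

lemma starExt_unitCW_unitCW (u v : Fin d → ℂ) :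
    starExt ν (u, unitCW) (v, (unitCW : List A → ℂ)) = (u + v, unitCW) := by
  simp [starExt, add_comm]

lemma starExt_zero_zero (γ δ : List A → ℂ) :
    starExt ν ((0 : Fin d → ℂ), γ) (0, δ) = (0, conv γ δ) := by
  simp [starExt]

lemma starExt_inv_right {p : (Fin d → ℂ) × (List A → ℂ)} (hp : isGrp p.2) :
    starExt ν p (-p.1, XiOp ν (-p.1) (antipode p.2)) = (0, unitCW) := by
  simp [starExt, XiOp_XiOp, antipode, hp.1, conv_antipode hp]

lemma starExt_inv_left {p : (Fin d → ℂ) × (List A → ℂ)} (hp : isGrp p.2) :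
    starExt ν (-p.1, XiOp ν (-p.1) (antipode p.2)) p = (0, unitCW) := by
  simp [starExt, hp.1, ← XiOp_conv, antipode_conv hp]

end ExtendedGroup

end ShuffleCharacters

theorem stmt10_general {A : Type*} {d : ℕ} (ν : Fin d → A → ℂ) :
    -- Ḡ is closed under ⋆
    (∀ p q : (Fin d → ℂ) × (List A → ℂ), isGrp p.2 → isGrp q.2 →
      isGrp (starExt ν p q).2) ∧
    -- ⋆ is associative on Ḡ
    (∀ p q r : (Fin d → ℂ) × (List A → ℂ), isGrp p.2 → isGrp q.2 → isGrp r.2 →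
      starExt ν (starExt ν p q) r = starExt ν p (starExt ν q r)) ∧
    -- (0,1) ∈ Ḡ and is a two-sided unit
    isGrp (unitCW : List A → ℂ) ∧
    (∀ p : (Fin d → ℂ) × (List A → ℂ), isGrp p.2 →
      starExt ν p (0, unitCW) = p ∧ starExt ν (0, unitCW) p = p) ∧
    -- two-sided inverses in Ḡ
    (∀ p : (Fin d → ℂ) × (List A → ℂ), isGrp p.2 →
      ∃ q : (Fin d → ℂ) × (List A → ℂ), isGrp q.2 ∧
        starExt ν p q = (0, unitCW) ∧ starExt ν q p = (0, unitCW)) ∧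
    -- ℂ^d × {1} is a subgroup
    (∀ u v : Fin d → ℂ, starExt ν (u, unitCW) (v, unitCW) = (u + v, unitCW)) ∧
    (∀ u : Fin d → ℂ, starExt ν (u, unitCW) (-u, unitCW) = (0, unitCW) ∧
      starExt ν (-u, unitCW) (u, unitCW) = (0, unitCW)) ∧
    -- {0} × G is a subgroup
    (∀ γ δ : List A → ℂ, isGrp γ → isGrp δ →
      (starExt ν ((0 : Fin d → ℂ), γ) (0, δ)).1 = 0 ∧
      isGrp (starExt ν ((0 : Fin d → ℂ), γ) (0, δ)).2) ∧
    (∀ γ : List A → ℂ, isGrp γ → ∃ γinv : List A → ℂ, isGrp γinv ∧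
      starExt ν ((0 : Fin d → ℂ), γ) (0, γinv) = (0, unitCW) ∧
      starExt ν ((0 : Fin d → ℂ), γinv) (0, γ) = (0, unitCW)) := by
  refine ⟨fun p q hp hq => isGrp_conv hp (isGrp_XiOp ν p.1 hq),
    fun p q r _ hq _ => starExt_assoc ν p q r hq.1, isGrp_unitCW,
    fun p _ => ⟨starExt_zero_unitCW ν p, zero_unitCW_starExt ν p⟩,
    fun p hp => ⟨_, isGrp_XiOp ν _ (isGrp_antipode hp), starExt_inv_right ν hp,
      starExt_inv_left ν hp⟩,
    starExt_unitCW_unitCW ν, fun u => ?_, fun γ δ hγ hδ => ?_, fun γ hγ => ?_⟩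
  · simp [starExt_unitCW_unitCW]
  · rw [starExt_zero_zero]
    exact ⟨rfl, isGrp_conv hγ hδ⟩
  · refine ⟨antipode γ, isGrp_antipode hγ, ?_, ?_⟩
    · rw [starExt_zero_zero, conv_antipode hγ]
    · rw [starExt_zero_zero, antipode_conv hγ]

/-- `Ḡ = ℂ^d × G` with `(u,γ)⋆(v,δ) = (v + δ_∅ u, γ★(Ξ_u δ))` is a group
with unit `(0,1)`: it is closed under `⋆`, `⋆` is associative on it, `(0,1)` is a two-sided
unit, and every element has a two-sided inverse in `Ḡ`; moreover `ℂ^d × {1}` and `{0} × G`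
are subgroups (closed under `⋆` and under taking these inverses). -/
theorem stmt10 {A : Type*} [Countable A] {d : ℕ} (hd : 1 ≤ d) (ν : Fin d → A → ℂ) :
    -- Ḡ is closed under ⋆
    (∀ p q : (Fin d → ℂ) × (List A → ℂ), isGrp p.2 → isGrp q.2 →
      isGrp (starExt ν p q).2) ∧
    -- ⋆ is associative on Ḡ
    (∀ p q r : (Fin d → ℂ) × (List A → ℂ), isGrp p.2 → isGrp q.2 → isGrp r.2 →
      starExt ν (starExt ν p q) r = starExt ν p (starExt ν q r)) ∧
    -- (0,1) ∈ Ḡ and is a two-sided unit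
    isGrp (unitCW : List A → ℂ) ∧
    (∀ p : (Fin d → ℂ) × (List A → ℂ), isGrp p.2 →
      starExt ν p (0, unitCW) = p ∧ starExt ν (0, unitCW) p = p) ∧
    -- two-sided inverses in Ḡ
    (∀ p : (Fin d → ℂ) × (List A → ℂ), isGrp p.2 →
      ∃ q : (Fin d → ℂ) × (List A → ℂ), isGrp q.2 ∧
        starExt ν p q = (0, unitCW) ∧ starExt ν q p = (0, unitCW)) ∧
    -- ℂ^d × {1} is a subgroup
    (∀ u v : Fin d → ℂ, starExt ν (u, unitCW) (v, unitCW) = (u + v, unitCW)) ∧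
    (∀ u : Fin d → ℂ, starExt ν (u, unitCW) (-u, unitCW) = (0, unitCW) ∧
      starExt ν (-u, unitCW) (u, unitCW) = (0, unitCW)) ∧
    -- {0} × G is a subgroup
    (∀ γ δ : List A → ℂ, isGrp γ → isGrp δ →
      (starExt ν ((0 : Fin d → ℂ), γ) (0, δ)).1 = 0 ∧
      isGrp (starExt ν ((0 : Fin d → ℂ), γ) (0, δ)).2) ∧
    (∀ γ : List A → ℂ, isGrp γ → ∃ γinv : List A → ℂ, isGrp γinv ∧
      starExt ν ((0 : Fin d → ℂ), γ) (0, γinv) = (0, unitCW) ∧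
      starExt ν ((0 : Fin d → ℂ), γinv) (0, γ) = (0, unitCW)) :=
  stmt10_general ν
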